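/- arXiv:1312.3533 — 2 statements merged into one kernel-verified Lean document; each statement's English description precedes it below -/
import Mathlib

section
/- Starting from v_0 ∈ (0, ρ_u), the iterates v_{n+1} = F(v_n) with F(v) = (1-η)v + β(1-v)v², η ∈ (0,1), 0 < β ≤ 1, β > 4η, form a monotone nonincreasing sequence converging to 0. -/
/-- Starting from `v₀ ∈ (0, ρ_u)`, the mean-field iterates
`v_{n+1} = (1-η)v_n + β(1-v_n)v_n²` (with `η ∈ (0,1)`, `0 < β ≤ 1`, `β > 4η`)
form a monotone nonincreasing sequence converging to `0`. -/
theorem stmt_6 (η β : ℝ) (hη : η ∈ Set.Ioo (0:ℝ) 1) (hβ0 : 0 < β) (hβ1 : β ≤ 1)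
    (hβ : β > 4 * η)
    (ρu : ℝ) (hu : ρu = (1 - Real.sqrt (1 - 4 * η / β)) / 2)
    (v : ℕ → ℝ) (h0 : v 0 ∈ Set.Ioo 0 ρu)
    (hrec : ∀ n, v (n + 1) = (1 - η) * v n + β * (1 - v n) * v n ^ 2) :
    Antitone v ∧ Filter.Tendsto v Filter.atTop (nhds 0) := by
  obtain ⟨hη0, hη1⟩ := hη
  obtain ⟨hv0, hv0u⟩ := h0
  set s := Real.sqrt (1 - 4 * η / β) with hs
  have harg : 0 < 1 - 4 * η / β := by
    have : 4 * η / β < 1 := (div_lt_one hβ0).2 (by linarith)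
    linarith
  have hs2 : s ^ 2 = 1 - 4 * η / β := Real.sq_sqrt harg.le
  have hs0 : 0 < s := Real.sqrt_pos.2 harg
  have hs1 : s < 1 := by nlinarith
  have hρ0 : 0 < ρu := by rw [hu]; linarith
  have hρh : ρu < 1 / 2 := by rw [hu]; linarith
  have hfix : β * ρu * (1 - ρu) = η := by
    have h4 : (4 : ℝ) * η / β * β = 4 * η := by field_simp
    rw [hu]; nlinarith [hs2]
  have hkey : ∀ x : ℝ, 0 ≤ x → x ≤ v 0 → β * x * (1 - x) < η := by
    intro x hx0 hxv
    have h1 : 0 < ρu - x := by linarith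
    have h2 : 0 < 1 - ρu - x := by linarith
    nlinarith [mul_pos hβ0 (mul_pos h1 h2)]
  have hinv : ∀ n, 0 ≤ v n ∧ v n ≤ v 0 := by
    intro n
    induction n with
    | zero => exact ⟨hv0.le, le_refl _⟩
    | succ n ih =>
      obtain ⟨h1, h2⟩ := ih
      have hlt := hkey (v n) h1 h2
      have hle1 : v n ≤ 1 := by linarith
      constructor
      · rw [hrec n]
        nlinarith [mul_nonneg (by linarith : (0:ℝ) ≤ 1 - η) h1,
          mul_nonneg (mul_nonneg hβ0.le (by linarith : (0:ℝ) ≤ 1 - v n)) (sq_nonneg (v n))]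
      · rw [hrec n]
        nlinarith [mul_nonneg h1 (by linarith : (0:ℝ) ≤ η - β * v n * (1 - v n))]
  have hstep : ∀ n, v (n + 1) ≤ v n := by
    intro n
    obtain ⟨h1, h2⟩ := hinv n
    have hlt := hkey (v n) h1 h2
    rw [hrec n]
    nlinarith [mul_nonneg h1 (by linarith : (0:ℝ) ≤ η - β * v n * (1 - v n))]
  refine ⟨antitone_nat_of_succ_le hstep, ?_⟩
  set c : ℝ := 1 - η + β * (v 0) * (1 - v 0) with hc
  have hc1 : c < 1 := by
    have := hkey (v 0) hv0.le (le_refl _)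
    rw [hc]; linarith
  have hc0 : 0 ≤ c := by
    have : 0 ≤ β * (v 0) * (1 - v 0) :=
      mul_nonneg (mul_nonneg hβ0.le hv0.le) (by linarith)
    rw [hc]; linarith
  have hgeo : ∀ n, v n ≤ c ^ n * v 0 := by
    intro n
    induction n with
    | zero => simp
    | succ n ih =>
      obtain ⟨h1, h2⟩ := hinv n
      have hmono : β * (v n) * (1 - v n) ≤ β * (v 0) * (1 - v 0) := by
        nlinarith [mul_nonneg (mul_nonneg hβ0.le (by linarith : (0:ℝ) ≤ v 0 - v n))
          (by linarith : (0:ℝ) ≤ 1 - v 0 - v n)]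
      have hstep2 : v (n + 1) ≤ c * v n := by
        rw [hrec n, hc]
        nlinarith [mul_nonneg h1 (by linarith : (0:ℝ) ≤ β * (v 0) * (1 - v 0) - β * (v n) * (1 - v n))]
      calc v (n + 1) ≤ c * v n := hstep2
        _ ≤ c * (c ^ n * v 0) := by
            exact mul_le_mul_of_nonneg_left ih hc0
        _ = c ^ (n + 1) * v 0 := by ring
  have hlim : Filter.Tendsto (fun n => c ^ n * v 0) Filter.atTop (nhds 0) := by
    have := (tendsto_pow_atTop_nhds_zero_of_lt_one hc0 hc1).mul_const (v 0)
    simpa using this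
  exact squeeze_zero (fun n => (hinv n).1) hgeo hlim
end

section
/- Let k: ℝ² → [0,∞) be integrable with ∫k = 1, and let u, v: ℝ² → [0,1] be measurable with u ≤ v pointwise. Then the operator Q[u] = (1-η)[u + β(1-u)(k∗u²)] satisfies Q[u] ≤ Q[v] pointwise, provided η ∈ (0,1) and 0 < β ≤ 1. -/
open MeasureTheory

/-- Monotonicity (attractiveness) of the integro-difference operator
`Q[u](x) = (1-η)[u(x) + β(1-u(x))(k∗u²)(x)]` on `[0,1]`-valued functions:
if `u ≤ v` pointwise then `Q[u] ≤ Q[v]` pointwise, for `η ∈ (0,1)`, `0 < β ≤ 1`,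
and `k ≥ 0` integrable with `∫ k = 1`. -/
theorem stmt_19 (η β : ℝ) (hη : η ∈ Set.Ioo (0:ℝ) 1) (hβ0 : 0 < β) (hβ1 : β ≤ 1)
    (k : (Fin 2 → ℝ) → ℝ) (hk0 : ∀ x, 0 ≤ k x) (hk : Integrable k volume)
    (hk1 : ∫ x, k x = 1)
    (u v : (Fin 2 → ℝ) → ℝ) (hu : Measurable u) (hv : Measurable v)
    (hu01 : ∀ x, u x ∈ Set.Icc (0:ℝ) 1) (hv01 : ∀ x, v x ∈ Set.Icc (0:ℝ) 1)
    (huv : ∀ x, u x ≤ v x) :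
    ∀ x, (1 - η) * (u x + β * (1 - u x) * ∫ y, k (x - y) * (u y) ^ 2)
      ≤ (1 - η) * (v x + β * (1 - v x) * ∫ y, k (x - y) * (v y) ^ 2) := by
  intro x
  -- integrability of translated kernel
  have hkx : Integrable (fun y => k (x - y)) volume :=
    (integrable_comp_sub_left k x).mpr hk
  have hkx1 : (∫ y, k (x - y)) = 1 := by
    rw [integral_sub_left_eq_self k volume x, hk1]
  -- integrability of the convolution integrands
  have hint : ∀ (w : (Fin 2 → ℝ) → ℝ), Measurable w → (∀ x, w x ∈ Set.Icc (0:ℝ) 1) →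
      Integrable (fun y => k (x - y) * (w y) ^ 2) volume := by
    intro w hw hw01
    have : Integrable (fun y => (w y) ^ 2 * k (x - y)) volume := by
      refine Integrable.bdd_mul (c := 1) hkx ((hw.pow_const 2).aestronglyMeasurable) ?_
      filter_upwards with y
      rw [Real.norm_eq_abs, abs_of_nonneg (sq_nonneg _)]
      have h1 := (hw01 y).1; have h2 := (hw01 y).2
      nlinarith
    simpa [mul_comm] using this
  have hintu := hint u hu hu01
  have hintv := hint v hv hv01
  set Iu := ∫ y, k (x - y) * (u y) ^ 2 with hIu
  set Iv := ∫ y, k (x - y) * (v y) ^ 2 with hIv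
  have hIuIv : Iu ≤ Iv := by
    refine integral_mono hintu hintv fun y => ?_
    have h1 := (hu01 y).1
    have h2 := huv y
    have hky := hk0 (x - y)
    have : (u y) ^ 2 ≤ (v y) ^ 2 := by nlinarith
    exact mul_le_mul_of_nonneg_left this hky
  have hIu0 : 0 ≤ Iu := by
    refine integral_nonneg fun y => ?_
    exact mul_nonneg (hk0 _) (sq_nonneg _)
  have hIv1 : Iv ≤ 1 := by
    rw [← hkx1]
    refine integral_mono hintv hkx fun y => ?_
    have h1 := (hv01 y).1
    have h2 := (hv01 y).2
    have hky := hk0 (x - y)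
    have : (v y) ^ 2 ≤ 1 := by nlinarith
    nlinarith [mul_le_mul_of_nonneg_left this hky]
  have hη1 : (0:ℝ) ≤ 1 - η := by linarith [hη.2]
  have hux := hu01 x
  have hvx := hv01 x
  have huvx := huv x
  have key : u x + β * (1 - u x) * Iu ≤ v x + β * (1 - v x) * Iv := by
    have step1 : u x + β * (1 - u x) * Iu ≤ u x + β * (1 - u x) * Iv := by
      have : (0:ℝ) ≤ β * (1 - u x) := by nlinarith [hux.2]
      nlinarith
    have step2 : u x + β * (1 - u x) * Iv ≤ v x + β * (1 - v x) * Iv := by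
      have hIv0 : 0 ≤ Iv := le_trans hIu0 hIuIv
      nlinarith [mul_nonneg (sub_nonneg.mpr huvx) (sub_nonneg.mpr (mul_le_one₀ hβ1 hIv0 hIv1))]
    linarith
  exact mul_le_mul_of_nonneg_left key hη1
end
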